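/- For all integers p and all n ≥ 0, ∑_{k=0}^n C(n,k) F_{p-1}^k F_{p+1}^{n-k} F_k F_{n-k} = (L_p^n L_n − L_{pn})/5. -/

import Mathlib

open Real goldenRatio

/-- The Lucas numbers on natural indices: `L 0 = 2`, `L 1 = 1`, `L (n+2) = L (n+1) + L n`. -/
def lucasNat : ℕ → ℤ
  | 0 => 2
  | 1 => 1
  | n + 2 => lucasNat (n + 1) + lucasNat n

/-- The Fibonacci numbers extended to negative indices by `F (-n) = (-1)^(n-1) * F n`. -/
def fibZ (m : ℤ) : ℤ :=
  if 0 ≤ m then Nat.fib m.toNat else (-1) ^ ((-m).toNat + 1) * Nat.fib (-m).toNat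

/-- The Lucas numbers extended to negative indices by `L (-n) = (-1)^n * L n`. -/
def lucasZ (m : ℤ) : ℤ :=
  if 0 ≤ m then lucasNat m.toNat else (-1) ^ (-m).toNat * lucasNat (-m).toNat

lemma fibZ_nat (n : ℕ) : fibZ n = Nat.fib n := by simp [fibZ]

lemma fibZ_negnat (n : ℕ) : fibZ (-(n:ℤ)) = (-1)^(n+1) * Nat.fib n := by
  cases n with
  | zero => simp [fibZ]
  | succ k =>
      rw [fibZ, if_neg (by omega : ¬ (0:ℤ) ≤ -((k+1:ℕ):ℤ))]
      simp

lemma lucasZ_nat (n : ℕ) : lucasZ n = lucasNat n := by simp [lucasZ]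

lemma lucasZ_negnat (n : ℕ) : lucasZ (-(n:ℤ)) = (-1)^n * lucasNat n := by
  cases n with
  | zero => simp [lucasZ]
  | succ k =>
      rw [lucasZ, if_neg (by omega : ¬ (0:ℤ) ≤ -((k+1:ℕ):ℤ))]
      simp

lemma lucas_fib : ∀ n : ℕ, lucasNat (n+1) = Nat.fib (n+2) + Nat.fib n
  | 0 => by simp [lucasNat]
  | 1 => by simp [lucasNat]; rfl
  | n + 2 => by
      show lucasNat (n+2) + lucasNat (n+1) = _
      rw [lucas_fib (n+1), lucas_fib n]
      have h1 : Nat.fib (n+4) = Nat.fib (n+2) + Nat.fib (n+3) := Nat.fib_add_two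
      have h2 : Nat.fib (n+2) = Nat.fib n + Nat.fib (n+1) := Nat.fib_add_two
      push_cast [h1, h2]
      ring

/-- Fibonacci recurrence over ℤ. -/
lemma fibZ_rec (m : ℤ) : fibZ (m + 1) = fibZ m + fibZ (m - 1) := by
  obtain ⟨n, rfl | rfl⟩ := m.eq_nat_or_neg
  · cases n with
    | zero => decide
    | succ k =>
        have e1 : ((k+1:ℕ):ℤ) + 1 = ((k+2:ℕ):ℤ) := by push_cast; ring
        have e2 : ((k+1:ℕ):ℤ) - 1 = ((k:ℕ):ℤ) := by push_cast; ring
        rw [e1, e2, fibZ_nat, fibZ_nat, fibZ_nat]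
        have : Nat.fib (k+2) = Nat.fib k + Nat.fib (k+1) := Nat.fib_add_two
        push_cast [this]; ring
  · cases n with
    | zero => decide
    | succ k =>
        have e1 : -((k+1:ℕ):ℤ) + 1 = -((k:ℕ):ℤ) := by push_cast; ring
        have e2 : -((k+1:ℕ):ℤ) - 1 = -((k+2:ℕ):ℤ) := by push_cast; ring
        rw [e1, e2, fibZ_negnat, fibZ_negnat, fibZ_negnat]
        have : Nat.fib (k+2) = Nat.fib k + Nat.fib (k+1) := Nat.fib_add_two
        push_cast [this]; ring

/-- Lucas in terms of Fibonacci over ℤ. -/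
lemma lucasZ_eq (m : ℤ) : lucasZ m = fibZ (m + 1) + fibZ (m - 1) := by
  obtain ⟨n, rfl | rfl⟩ := m.eq_nat_or_neg
  · cases n with
    | zero => decide
    | succ k =>
        have e1 : ((k+1:ℕ):ℤ) + 1 = ((k+2:ℕ):ℤ) := by push_cast; ring
        have e2 : ((k+1:ℕ):ℤ) - 1 = ((k:ℕ):ℤ) := by push_cast; ring
        rw [e1, e2, lucasZ_nat, fibZ_nat, fibZ_nat, lucas_fib k]
  · cases n with
    | zero => decide
    | succ k =>
        have e1 : -((k+1:ℕ):ℤ) + 1 = -((k:ℕ):ℤ) := by push_cast; ring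
        have e2 : -((k+1:ℕ):ℤ) - 1 = -((k+2:ℕ):ℤ) := by push_cast; ring
        rw [e1, e2, lucasZ_negnat, fibZ_negnat, fibZ_negnat, lucas_fib k]
        have : Nat.fib (k+2) = Nat.fib k + Nat.fib (k+1) := Nat.fib_add_two
        push_cast [this]; ring

lemma gold_pow_nat (n : ℕ) : φ ^ (n+1) = (Nat.fib (n+1) : ℝ) * φ + Nat.fib n := by
  induction n with
  | zero => simp
  | succ k ih =>
      have : φ ^ (k+2) = φ ^ (k+1) * φ := by ring
      rw [this, ih]
      have hf : (Nat.fib (k+2) : ℝ) = Nat.fib (k+1) + Nat.fib k := by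
        have : Nat.fib (k+2) = Nat.fib k + Nat.fib (k+1) := Nat.fib_add_two
        push_cast [this]; ring
      rw [hf]
      linear_combination (Nat.fib (k+1) : ℝ) * goldenRatio_sq

lemma goldConj_pow_nat (n : ℕ) : ψ ^ (n+1) = (Nat.fib (n+1) : ℝ) * ψ + Nat.fib n := by
  induction n with
  | zero => simp
  | succ k ih =>
      have : ψ ^ (k+2) = ψ ^ (k+1) * ψ := by ring
      rw [this, ih]
      have hf : (Nat.fib (k+2) : ℝ) = Nat.fib (k+1) + Nat.fib k := by
        have : Nat.fib (k+2) = Nat.fib k + Nat.fib (k+1) := Nat.fib_add_two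
        push_cast [this]; ring
      rw [hf]
      linear_combination (Nat.fib (k+1) : ℝ) * goldenConj_sq

lemma gold_inv_pow_nat (n : ℕ) :
    (-ψ) ^ n = ((-1)^(n+1) * Nat.fib n : ℝ) * φ + (-1)^n * Nat.fib (n+1) := by
  induction n with
  | zero => simp
  | succ k ih =>
      have : (-ψ) ^ (k+1) = (-ψ) ^ k * (-ψ) := by ring
      rw [this, ih]
      have hf : (Nat.fib (k+2) : ℝ) = Nat.fib (k+1) + Nat.fib k := by
        have : Nat.fib (k+2) = Nat.fib k + Nat.fib (k+1) := Nat.fib_add_two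
        push_cast [this]; ring
      have hψ : ψ = 1 - φ := (one_sub_goldenConj).symm
      rw [hf, hψ]
      linear_combination ((-1:ℝ)^(k+1) * Nat.fib k) * goldenRatio_sq

lemma goldConj_inv_pow_nat (n : ℕ) :
    (-φ) ^ n = ((-1)^(n+1) * Nat.fib n : ℝ) * ψ + (-1)^n * Nat.fib (n+1) := by
  induction n with
  | zero => simp
  | succ k ih =>
      have : (-φ) ^ (k+1) = (-φ) ^ k * (-φ) := by ring
      rw [this, ih]
      have hf : (Nat.fib (k+2) : ℝ) = Nat.fib (k+1) + Nat.fib k := by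
        have : Nat.fib (k+2) = Nat.fib k + Nat.fib (k+1) := Nat.fib_add_two
        push_cast [this]; ring
      have hφ : φ = 1 - ψ := (one_sub_goldenRatio).symm
      rw [hf, hφ]
      linear_combination ((-1:ℝ)^(k+1) * Nat.fib k) * goldenConj_sq

/-- zpow expansion of the golden ratio. -/
lemma gold_zpow (m : ℤ) : φ ^ m = (fibZ m : ℝ) * φ + (fibZ (m-1) : ℝ) := by
  obtain ⟨n, rfl | rfl⟩ := m.eq_nat_or_neg
  · cases n with
    | zero =>
        norm_num [show fibZ 0 = 0 by decide, show fibZ (-1) = 1 by decide]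
    | succ k =>
        have e2 : ((k+1:ℕ):ℤ) - 1 = ((k:ℕ):ℤ) := by push_cast; ring
        rw [e2, fibZ_nat, fibZ_nat, zpow_natCast, gold_pow_nat]
        push_cast; ring
  · have h1 : φ ^ (-(n:ℤ)) = (-ψ) ^ n := by
      rw [zpow_neg, zpow_natCast, ← inv_pow, inv_goldenRatio]
    have e2 : -((n:ℕ):ℤ) - 1 = -((n+1:ℕ):ℤ) := by push_cast; ring
    rw [h1, e2, fibZ_negnat, fibZ_negnat, gold_inv_pow_nat]
    push_cast; ring

lemma goldConj_zpow (m : ℤ) : ψ ^ m = (fibZ m : ℝ) * ψ + (fibZ (m-1) : ℝ) := by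
  obtain ⟨n, rfl | rfl⟩ := m.eq_nat_or_neg
  · cases n with
    | zero =>
        norm_num [show fibZ 0 = 0 by decide, show fibZ (-1) = 1 by decide]
    | succ k =>
        have e2 : ((k+1:ℕ):ℤ) - 1 = ((k:ℕ):ℤ) := by push_cast; ring
        rw [e2, fibZ_nat, fibZ_nat, zpow_natCast, goldConj_pow_nat]
        push_cast; ring
  · have h1 : ψ ^ (-(n:ℤ)) = (-φ) ^ n := by
      rw [zpow_neg, zpow_natCast, ← inv_pow, inv_goldenConj]
    have e2 : -((n:ℕ):ℤ) - 1 = -((n+1:ℕ):ℤ) := by push_cast; ring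
    rw [h1, e2, fibZ_negnat, fibZ_negnat, goldConj_inv_pow_nat]
    push_cast; ring

/-- Lucas via golden powers. -/
lemma lucasZ_eq_zpow (m : ℤ) : (lucasZ m : ℝ) = φ ^ m + ψ ^ m := by
  rw [gold_zpow, goldConj_zpow, lucasZ_eq m, fibZ_rec m]
  push_cast
  linear_combination (fibZ m : ℝ) * goldenRatio_add_goldenConj

/-- Key identity: `F(p-1) φ + F(p+1) ψ = ψ^p`. -/
lemma key_psi (p : ℤ) : (fibZ (p-1) : ℝ) * φ + (fibZ (p+1) : ℝ) * ψ = ψ ^ p := by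
  rw [goldConj_zpow, fibZ_rec p]
  have hψ : ψ = 1 - φ := (one_sub_goldenConj).symm
  push_cast
  rw [hψ]; ring

lemma key_phi (p : ℤ) : (fibZ (p-1) : ℝ) * ψ + (fibZ (p+1) : ℝ) * φ = φ ^ p := by
  rw [gold_zpow, fibZ_rec p]
  have hψ : ψ = 1 - φ := (one_sub_goldenConj).symm
  push_cast
  rw [hψ]; ring

theorem binomial_conv_fib_general (p : ℤ) (n : ℕ) :
    5 * ∑ k ∈ Finset.range (n + 1),
        (n.choose k : ℤ) * fibZ (p - 1) ^ k * fibZ (p + 1) ^ (n - k) *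
          Nat.fib k * Nat.fib (n - k) =
      lucasZ p ^ n * lucasNat n - lucasZ (p * n) := by
  have hinj := @Int.cast_injective ℝ _
  apply hinj
  push_cast
  have hs5 : Real.sqrt 5 * Real.sqrt 5 = 5 := Real.mul_self_sqrt (by norm_num)
  have hfib : ∀ k : ℕ, φ ^ k - ψ ^ k = Real.sqrt 5 * Nat.fib k := by
    intro k
    have h5 : Real.sqrt 5 ≠ 0 := by positivity
    rw [Real.coe_fib_eq, mul_div_cancel₀ _ h5]
  have step : ∀ k ∈ Finset.range (n+1),
      5 * ((n.choose k : ℝ) * (fibZ (p-1) : ℝ) ^ k * (fibZ (p+1) : ℝ) ^ (n-k) *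
          Nat.fib k * Nat.fib (n-k)) =
        ((fibZ (p-1) : ℝ)*φ)^k * ((fibZ (p+1) : ℝ)*φ)^(n-k) * (n.choose k : ℝ)
        - ((fibZ (p-1) : ℝ)*φ)^k * ((fibZ (p+1) : ℝ)*ψ)^(n-k) * (n.choose k : ℝ)
        - ((fibZ (p-1) : ℝ)*ψ)^k * ((fibZ (p+1) : ℝ)*φ)^(n-k) * (n.choose k : ℝ)
        + ((fibZ (p-1) : ℝ)*ψ)^k * ((fibZ (p+1) : ℝ)*ψ)^(n-k) * (n.choose k : ℝ) := by
    intro k _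
    have h1 := hfib k
    have h2 := hfib (n-k)
    generalize goldenRatio = a at h1 h2 ⊢
    generalize goldenConj = b at h1 h2 ⊢
    linear_combination (-(n.choose k : ℝ) * (fibZ (p-1) : ℝ)^k * (fibZ (p+1) : ℝ)^(n-k)) *
        ((a^(n-k) - b^(n-k)) * h1 + (Real.sqrt 5 * Nat.fib k) * h2
          + (Nat.fib k : ℝ) * Nat.fib (n-k) * hs5)
  rw [Finset.mul_sum, Finset.sum_congr rfl step]
  rw [Finset.sum_add_distrib, Finset.sum_sub_distrib, Finset.sum_sub_distrib,
    ← add_pow, ← add_pow, ← add_pow, ← add_pow]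
  have hLrec : (lucasZ p : ℝ) = (fibZ (p-1) : ℝ) + (fibZ (p+1) : ℝ) := by
    rw [lucasZ_eq p]; push_cast; ring
  have hA : ((fibZ (p-1) : ℝ)*φ + (fibZ (p+1) : ℝ)*φ) = (lucasZ p : ℝ) * φ := by
    rw [hLrec]; ring
  have hD : ((fibZ (p-1) : ℝ)*ψ + (fibZ (p+1) : ℝ)*ψ) = (lucasZ p : ℝ) * ψ := by
    rw [hLrec]; ring
  have hB : ((fibZ (p-1) : ℝ)*φ + (fibZ (p+1) : ℝ)*ψ) = ψ ^ p := key_psi p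
  have hC : ((fibZ (p-1) : ℝ)*ψ + (fibZ (p+1) : ℝ)*φ) = φ ^ p := by
    exact key_phi p
  rw [hA, hB, hC, hD]
  have hBp : (ψ ^ p) ^ n = ψ ^ (p * (n:ℤ)) := by
    rw [zpow_mul, ← zpow_natCast (ψ ^ p) n]
  have hCp : (φ ^ p) ^ n = φ ^ (p * (n:ℤ)) := by
    rw [zpow_mul, ← zpow_natCast (φ ^ p) n]
  rw [hBp, hCp]
  have hLn : (lucasNat n : ℝ) = φ ^ (n:ℤ) + ψ ^ (n:ℤ) := by
    rw [← lucasZ_nat n, lucasZ_eq_zpow]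
  have hLpn : (lucasZ (p * n) : ℝ) = φ ^ (p*(n:ℤ)) + ψ ^ (p*(n:ℤ)) := lucasZ_eq_zpow _
  rw [hLn, hLpn, zpow_natCast, zpow_natCast]
  generalize goldenRatio = a
  generalize goldenConj = b
  ring
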